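/- arXiv:1101.0558 — 3 statements merged into one kernel-verified Lean document; each statement's English description precedes it below -/
import Mathlib

section
/- Let φ be a faithful normal semifinite weight on a von Neumann algebra M acting on a complex Hilbert space H (normal in the sense that φ admits a representation). Let (x_n) be a sequence in m_φ^sa which is Cauchy with respect to ‖·‖_φ and such that for all f, g ∈ D_φ the limit a(f,g) = lim_n ⟨x_n f, g⟩ exists. Then for every representation (f_i)_{i∈I} of φ, the family (a(f_i, f_i))_{i∈I} is absolutely summable and Σ_{i∈I} a(f_i, f_i) = lim_n φ̃(x_n); in particular, the sum Σ_{i∈I} a(f_i, f_i) does not depend on the choice of the representation of φ. -/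
open scoped ENNReal NNReal ComplexOrder
open Filter Topology

noncomputable section

universe v

variable {H : Type*} [NormedAddCommGroup H] [InnerProductSpace ℂ H] [CompleteSpace H]

/-- A weight on a von Neumann algebra `M` acting on `H`: a map `M⁺ → [0,∞]`
(formalized as a map on all of `B(H)`, with the axioms imposed on the positive
cone of `M`) with `φ(0) = 0` that is additive and positively homogeneous. -/
structure Weight (M : VonNeumannAlgebra H) where
  toFun : (H →L[ℂ] H) → ℝ≥0∞
  map_zero' : toFun 0 = 0
  map_add' : ∀ x y : H →L[ℂ] H, x ∈ M → y ∈ M → x.IsPositive → y.IsPositive →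
    toFun (x + y) = toFun x + toFun y
  map_smul' : ∀ (c : ℝ≥0) (x : H →L[ℂ] H), x ∈ M → x.IsPositive →
    toFun (c • x) = c * toFun x

namespace Weight

variable {M : VonNeumannAlgebra H} (φ : Weight M)

/-- `m_φ⁺ = {x ∈ M⁺ : φ(x) < ∞}`. -/
def mPos : Set (H →L[ℂ] H) := {x | x ∈ M ∧ x.IsPositive ∧ φ.toFun x < ∞}

/-- `m_φ^sa = m_φ⁺ − m_φ⁺`. -/
def mSa : Set (H →L[ℂ] H) := {x | ∃ x₁ ∈ φ.mPos, ∃ x₂ ∈ φ.mPos, x = x₁ - x₂}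

/-- The norm `‖x‖_φ = inf {φ(x₁ + x₂) : x = x₁ − x₂, x₁, x₂ ∈ m_φ⁺}`. -/
def phiNorm (x : H →L[ℂ] H) : ℝ :=
  sInf {r : ℝ | ∃ x₁ ∈ φ.mPos, ∃ x₂ ∈ φ.mPos, x = x₁ - x₂ ∧ r = (φ.toFun (x₁ + x₂)).toReal}

/-- The lineal of the weight:
`D_φ = {f ∈ H : ∃ λ > 0, ⟨x f, f⟩ ≤ λ φ(x) for all x ∈ M⁺}`. -/
def lineal : Set H :=
  {f | ∃ l : ℝ, 0 < l ∧ ∀ x : H →L[ℂ] H, x ∈ M → x.IsPositive →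
    ENNReal.ofReal (inner ℂ (x f) f : ℂ).re ≤ ENNReal.ofReal l * φ.toFun x}

/-- A representation of the weight `φ`: a family `(f_i)` of vectors such that
`∑ᵢ ⟨x f_i, f_i⟩ = φ(x)` (a sum in `[0,∞]`) for every positive `x ∈ M`. -/
def IsRepresentation {I : Type*} (f : I → H) : Prop :=
  ∀ x : H →L[ℂ] H, x ∈ M → x.IsPositive →
    ∑' i, ENNReal.ofReal (inner ℂ (x (f i)) (f i) : ℂ).re = φ.toFun x

/-- `φ` is normal iff it admits a representation. -/
def IsNormal : Prop := ∃ (I : Type v) (f : I → H), φ.IsRepresentation f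

/-- `φ` is faithful iff `φ(x) = 0` implies `x = 0` for positive `x ∈ M`. -/
def IsFaithful : Prop :=
  ∀ x : H →L[ℂ] H, x ∈ M → x.IsPositive → φ.toFun x = 0 → x = 0

/-- `φ` is semifinite iff `φ(x) = sup {φ(y) : y ∈ m_φ⁺, y ≤ x}` for every positive `x ∈ M`. -/
def IsSemifinite : Prop :=
  ∀ x : H →L[ℂ] H, x ∈ M → x.IsPositive →
    φ.toFun x = sSup {r : ℝ≥0∞ | ∃ y ∈ φ.mPos, (x - y).IsPositive ∧ r = φ.toFun y}

/-- The real-linear extension `φ̃` of `φ` to `m_φ^sa`, `φ̃(x₁ − x₂) = φ(x₁) − φ(x₂)`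
(defined via a choice of decomposition; by additivity of `φ` it does not depend
on the choice of the decomposition). -/
def tilde (x : H →L[ℂ] H) : ℝ :=
  letI := Classical.propDecidable
  if h : x ∈ φ.mSa then
    (φ.toFun h.choose).toReal - (φ.toFun h.choose_spec.2.choose).toReal
  else 0

end Weight

/-!
The values `⟨x_n f_i, f_i⟩` are summable in `i`, with sum `φ̃(x_n)`, and for a decomposition
`x = x₁ - x₂` into elements of `m_φ⁺` the `ℓ¹`-norm of `i ↦ ⟨x f_i, f_i⟩` is at most
`φ(x₁ + x₂)`. Hence it is at most `‖x‖_φ`, so `n ↦ (⟨x_n f_i, f_i⟩)_i` is Cauchy in `ℓ¹(I)`.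
Its `ℓ¹`-limit must be the pointwise limit `(a(f_i, f_i))_i`, and summation is `ℓ¹`-continuous,
so `∑ᵢ a(f_i, f_i) = lim_n φ̃(x_n)`. Normality supplies one representation, which shows that
this limit exists.
-/

open scoped InnerProductSpace

section CauchyInLOne

variable {ι E : Type*} [NormedAddCommGroup E]

theorem summable_norm_and_tsum_norm_le_of_tendsto {g : ℕ → ι → E} {A : ι → E} {c : ℝ}
    (hlim : ∀ i, Tendsto (fun m => g m i) atTop (𝓝 (A i)))
    (hg : ∀ᶠ m in atTop, Summable (fun i => ‖g m i‖) ∧ ∑' i, ‖g m i‖ ≤ c) :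
    Summable (fun i => ‖A i‖) ∧ ∑' i, ‖A i‖ ≤ c := by
  have hfin : ∀ F : Finset ι, ∑ i ∈ F, ‖A i‖ ≤ c := by
    intro F
    refine le_of_tendsto (tendsto_finsetSum F fun i _ => (hlim i).norm) ?_
    filter_upwards [hg] with m ⟨hsum, hle⟩
    exact (hsum.sum_le_tsum F fun i _ => norm_nonneg _).trans hle
  have hsum : Summable (fun i => ‖A i‖) := summable_of_sum_le (fun i => norm_nonneg _) hfin
  exact ⟨hsum, hsum.tsum_le_of_sum_le hfin⟩

theorem summable_norm_and_tendsto_tsum_of_cauchy [CompleteSpace E] {s : ℕ → ι → E}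
    {A : ι → E} (hs : ∀ n, Summable (fun i => ‖s n i‖))
    (hlim : ∀ i, Tendsto (fun n => s n i) atTop (𝓝 (A i)))
    (hcauchy : ∀ ε > 0, ∃ N, ∀ m ≥ N, ∀ n ≥ N, ∑' i, ‖s m i - s n i‖ ≤ ε) :
    Summable (fun i => ‖A i‖) ∧ Tendsto (fun n => ∑' i, s n i) atTop (𝓝 (∑' i, A i)) := by
  have htail : ∀ ε > 0, ∃ N, ∀ n ≥ N,
      Summable (fun i => ‖A i - s n i‖) ∧ ∑' i, ‖A i - s n i‖ ≤ ε := by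
    intro ε hε
    obtain ⟨N, hN⟩ := hcauchy ε hε
    refine ⟨N, fun n hn => summable_norm_and_tsum_norm_le_of_tendsto
      (fun i => (hlim i).sub_const (s n i)) ?_⟩
    filter_upwards [eventually_ge_atTop N] with m hm
    exact ⟨.of_nonneg_of_le (fun _ => norm_nonneg _) (fun i => norm_sub_le _ _)
      ((hs m).add (hs n)), hN m hm n hn⟩
  obtain ⟨N₀, hN₀⟩ := htail 1 one_pos
  have hA : Summable (fun i => ‖A i‖) :=
    .of_nonneg_of_le (fun _ => norm_nonneg _) (fun i => norm_le_norm_sub_add (A i) (s N₀ i))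
      ((hN₀ N₀ le_rfl).1.add (hs N₀))
  refine ⟨hA, Metric.tendsto_atTop.2 fun ε hε => ?_⟩
  obtain ⟨N, hN⟩ := htail (ε / 2) (half_pos hε)
  refine ⟨N, fun n hn => ?_⟩
  obtain ⟨hsum, hle⟩ := hN n hn
  calc dist (∑' i, s n i) (∑' i, A i) = ‖∑' i, (A i - s n i)‖ := by
        rw [dist_comm, dist_eq_norm, (hA.of_norm).tsum_sub (hs n).of_norm]
    _ ≤ ∑' i, ‖A i - s n i‖ := norm_tsum_le_tsum_norm hsum
    _ < ε := hle.trans_lt (half_lt_self hε)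

end CauchyInLOne

namespace Weight

variable {M : VonNeumannAlgebra H} (φ : Weight M)

theorem toFun_add_of_mem_mPos {x₁ x₂ : H →L[ℂ] H} (h₁ : x₁ ∈ φ.mPos) (h₂ : x₂ ∈ φ.mPos) :
    φ.toFun (x₁ + x₂) = φ.toFun x₁ + φ.toFun x₂ :=
  φ.map_add' x₁ x₂ h₁.1 h₂.1 h₁.2.1 h₂.2.1

theorem toReal_toFun_add_of_mem_mPos {x₁ x₂ : H →L[ℂ] H} (h₁ : x₁ ∈ φ.mPos)
    (h₂ : x₂ ∈ φ.mPos) :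
    (φ.toFun (x₁ + x₂)).toReal = (φ.toFun x₁).toReal + (φ.toFun x₂).toReal := by
  rw [φ.toFun_add_of_mem_mPos h₁ h₂, ENNReal.toReal_add h₁.2.2.ne h₂.2.2.ne]

theorem add_mem_mPos {x₁ x₂ : H →L[ℂ] H} (h₁ : x₁ ∈ φ.mPos) (h₂ : x₂ ∈ φ.mPos) :
    x₁ + x₂ ∈ φ.mPos := by
  refine ⟨M.toSubalgebra.add_mem h₁.1 h₂.1, h₁.2.1.add h₂.2.1, ?_⟩
  rw [φ.toFun_add_of_mem_mPos h₁ h₂]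
  exact ENNReal.add_lt_top.2 ⟨h₁.2.2, h₂.2.2⟩

theorem sub_mem_mSa {x y : H →L[ℂ] H} (hx : x ∈ φ.mSa) (hy : y ∈ φ.mSa) : x - y ∈ φ.mSa := by
  obtain ⟨x₁, hx₁, x₂, hx₂, rfl⟩ := hx
  obtain ⟨y₁, hy₁, y₂, hy₂, rfl⟩ := hy
  exact ⟨x₁ + y₂, φ.add_mem_mPos hx₁ hy₂, x₂ + y₁, φ.add_mem_mPos hx₂ hy₁, by abel⟩

theorem tilde_sub_of_mem_mPos {x₁ x₂ : H →L[ℂ] H} (h₁ : x₁ ∈ φ.mPos) (h₂ : x₂ ∈ φ.mPos) :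
    φ.tilde (x₁ - x₂) = (φ.toFun x₁).toReal - (φ.toFun x₂).toReal := by
  have h : x₁ - x₂ ∈ φ.mSa := ⟨x₁, h₁, x₂, h₂, rfl⟩
  obtain ⟨hy₂, hd⟩ := h.choose_spec.2.choose_spec
  have e := congrArg (fun y => (φ.toFun y).toReal) (sub_eq_sub_iff_add_eq_add.1 hd.symm)
  simp only [φ.toReal_toFun_add_of_mem_mPos h.choose_spec.1 h₂,
    φ.toReal_toFun_add_of_mem_mPos h₁ hy₂] at e
  rw [tilde, dif_pos h]
  linarith

namespace IsRepresentation

variable {φ} {I : Type*} {f : I → H} (hf : φ.IsRepresentation f)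
include hf

theorem mem_lineal (i : I) : f i ∈ φ.lineal := by
  refine ⟨1, one_pos, fun y hyM hypos => ?_⟩
  rw [ENNReal.ofReal_one, one_mul, ← hf y hyM hypos]
  exact ENNReal.le_tsum i

theorem hasSum_re_inner {y : H →L[ℂ] H} (hy : y ∈ φ.mPos) :
    HasSum (fun i => (⟪y (f i), f i⟫_ℂ).re) (φ.toFun y).toReal := by
  have hfin : ∑' i, ENNReal.ofReal (⟪y (f i), f i⟫_ℂ).re ≠ ⊤ := by
    rw [hf y hy.1 hy.2.1]; exact hy.2.2.ne
  have h := ENNReal.hasSum_toReal hfin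
  rw [← ENNReal.tsum_toReal_eq fun _ => ENNReal.ofReal_ne_top, hf y hy.1 hy.2.1] at h
  convert h using 2 with i
  exact (ENNReal.toReal_ofReal (hy.2.1.re_inner_nonneg_left _)).symm

theorem summable_norm_inner_sub_and_tsum_le {x₁ x₂ : H →L[ℂ] H} (h₁ : x₁ ∈ φ.mPos)
    (h₂ : x₂ ∈ φ.mPos) :
    Summable (fun i => ‖⟪(x₁ - x₂) (f i), f i⟫_ℂ‖) ∧
      ∑' i, ‖⟪(x₁ - x₂) (f i), f i⟫_ℂ‖ ≤ (φ.toFun (x₁ + x₂)).toReal := by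
  have hbound : ∀ i, ‖⟪(x₁ - x₂) (f i), f i⟫_ℂ‖
      ≤ (⟪x₁ (f i), f i⟫_ℂ).re + (⟪x₂ (f i), f i⟫_ℂ).re := fun i => by
    rw [Complex.re_eq_norm.2 (h₁.2.1.inner_nonneg_left _),
      Complex.re_eq_norm.2 (h₂.2.1.inner_nonneg_left _),
      sub_apply, inner_sub_left]
    exact norm_sub_le _ _
  have hsum := (hf.hasSum_re_inner h₁).add (hf.hasSum_re_inner h₂)
  have hs : Summable (fun i => ‖⟪(x₁ - x₂) (f i), f i⟫_ℂ‖) :=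
    .of_nonneg_of_le (fun _ => norm_nonneg _) hbound hsum.summable
  refine ⟨hs, ?_⟩
  rw [φ.toReal_toFun_add_of_mem_mPos h₁ h₂, ← hsum.tsum_eq]
  exact hs.tsum_le_tsum hbound hsum.summable

theorem summable_norm_inner {x : H →L[ℂ] H} (hx : x ∈ φ.mSa) :
    Summable (fun i => ‖⟪x (f i), f i⟫_ℂ‖) := by
  obtain ⟨x₁, h₁, x₂, h₂, rfl⟩ := hx
  exact (hf.summable_norm_inner_sub_and_tsum_le h₁ h₂).1

theorem tsum_norm_inner_le_phiNorm {x : H →L[ℂ] H} (hx : x ∈ φ.mSa) :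
    ∑' i, ‖⟪x (f i), f i⟫_ℂ‖ ≤ φ.phiNorm x := by
  obtain ⟨x₁, h₁, x₂, h₂, hd⟩ := hx
  refine le_csInf ⟨_, x₁, h₁, x₂, h₂, hd, rfl⟩ ?_
  rintro r ⟨y₁, hy₁, y₂, hy₂, rfl, rfl⟩
  exact (hf.summable_norm_inner_sub_and_tsum_le hy₁ hy₂).2

theorem tsum_inner {x : H →L[ℂ] H} (hx : x ∈ φ.mSa) :
    ∑' i, ⟪x (f i), f i⟫_ℂ = φ.tilde x := by
  obtain ⟨x₁, h₁, x₂, h₂, rfl⟩ := hx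
  have hre := (hf.hasSum_re_inner h₁).sub (hf.hasSum_re_inner h₂)
  rw [φ.tilde_sub_of_mem_mPos h₁ h₂, ← Complex.hasSum_ofReal.2 hre |>.tsum_eq]
  refine tsum_congr fun i => ?_
  rw [sub_apply, inner_sub_left, Complex.ofReal_sub]
  exact congr_arg₂ (· - ·) (Complex.eq_re_of_ofReal_le (h₁.2.1.inner_nonneg_left _))
    (Complex.eq_re_of_ofReal_le (h₂.2.1.inner_nonneg_left _))

theorem summable_norm_and_tendsto_tilde {x : ℕ → (H →L[ℂ] H)} (hx : ∀ n, x n ∈ φ.mSa)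
    (hcauchy : ∀ ε : ℝ, 0 < ε → ∃ N : ℕ, ∀ m ≥ N, ∀ n ≥ N, φ.phiNorm (x m - x n) < ε)
    {a : H → H → ℂ}
    (ha : ∀ f ∈ φ.lineal, ∀ g ∈ φ.lineal,
      Tendsto (fun n => ⟪x n f, g⟫_ℂ) atTop (𝓝 (a f g))) :
    Summable (fun i => ‖a (f i) (f i)‖) ∧
      Tendsto (fun n => (φ.tilde (x n) : ℂ)) atTop (𝓝 (∑' i, a (f i) (f i))) := by
  have hcauchy_l1 : ∀ ε > 0, ∃ N, ∀ m ≥ N, ∀ n ≥ N,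
      ∑' i, ‖⟪x m (f i), f i⟫_ℂ - ⟪x n (f i), f i⟫_ℂ‖ ≤ ε := by
    intro ε hε
    obtain ⟨N, hN⟩ := hcauchy ε hε
    refine ⟨N, fun m hm n hn => ?_⟩
    simp only [← inner_sub_left, ← sub_apply]
    exact (hf.tsum_norm_inner_le_phiNorm (φ.sub_mem_mSa (hx m) (hx n))).trans (hN m hm n hn).le
  have h := summable_norm_and_tendsto_tsum_of_cauchy (fun n => hf.summable_norm_inner (hx n))
    (fun i => ha _ (hf.mem_lineal i) _ (hf.mem_lineal i)) hcauchy_l1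
  simpa only [hf.tsum_inner (hx _)] using h

end IsRepresentation

end Weight

theorem statement1_general {H : Type*} [NormedAddCommGroup H] [InnerProductSpace ℂ H]
    [CompleteSpace H] {M : VonNeumannAlgebra H} (φ : Weight M)
    (hnormal : φ.IsNormal)
    (x : ℕ → (H →L[ℂ] H)) (hx : ∀ n, x n ∈ φ.mSa)
    (hcauchy : ∀ ε : ℝ, 0 < ε → ∃ N : ℕ, ∀ m ≥ N, ∀ n ≥ N, φ.phiNorm (x m - x n) < ε)
    (a : H → H → ℂ)
    (ha : ∀ f ∈ φ.lineal, ∀ g ∈ φ.lineal,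
      Filter.Tendsto (fun n => (inner ℂ ((x n) f) g : ℂ)) Filter.atTop (nhds (a f g))) :
    ∃ L : ℝ, Filter.Tendsto (fun n => φ.tilde (x n)) Filter.atTop (nhds L) ∧
      ∀ {I : Type*} (f : I → H), φ.IsRepresentation f →
        Summable (fun i => ‖a (f i) (f i)‖) ∧ ∑' i, a (f i) (f i) = (L : ℂ) := by
  obtain ⟨I₀, f₀, hf₀⟩ := hnormal
  set L := (∑' i, a (f₀ i) (f₀ i)).re
  have hL : Tendsto (fun n => φ.tilde (x n)) atTop (𝓝 L) := by
    simpa only [Function.comp_def, Complex.ofReal_re] using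
      (Complex.continuous_re.tendsto _).comp (hf₀.summable_norm_and_tendsto_tilde hx hcauchy ha).2
  refine ⟨L, hL, fun f hf => ?_⟩
  obtain ⟨hsum, htend⟩ := hf.summable_norm_and_tendsto_tilde hx hcauchy ha
  exact ⟨hsum, tendsto_nhds_unique htend ((Complex.continuous_ofReal.tendsto L).comp hL)⟩

/-- Let `φ` be a faithful normal semifinite weight on a von Neumann
algebra `M` acting on a complex Hilbert space `H` (normal in the sense that `φ` admits
a representation). Let `(x_n)` be a sequence in `m_φ^sa` which is Cauchy with respect
to `‖·‖_φ` and such that for all `f, g ∈ D_φ` the limit `a(f,g) = lim_n ⟨x_n f, g⟩`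
exists. Then for every representation `(f_i)_{i∈I}` of `φ`, the family
`(a(f_i, f_i))_{i∈I}` is absolutely summable and `Σ_{i∈I} a(f_i, f_i) = lim_n φ̃(x_n)`;
in particular, the sum `Σ_{i∈I} a(f_i, f_i)` does not depend on the choice of the
representation of `φ`. -/
theorem statement1 {H : Type*} [NormedAddCommGroup H] [InnerProductSpace ℂ H]
    [CompleteSpace H] {M : VonNeumannAlgebra H} (φ : Weight M)
    (hfaithful : φ.IsFaithful) (hsemifinite : φ.IsSemifinite) (hnormal : φ.IsNormal)
    (x : ℕ → (H →L[ℂ] H)) (hx : ∀ n, x n ∈ φ.mSa)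
    (hcauchy : ∀ ε : ℝ, 0 < ε → ∃ N : ℕ, ∀ m ≥ N, ∀ n ≥ N, φ.phiNorm (x m - x n) < ε)
    (a : H → H → ℂ)
    (ha : ∀ f ∈ φ.lineal, ∀ g ∈ φ.lineal,
      Filter.Tendsto (fun n => (inner ℂ ((x n) f) g : ℂ)) Filter.atTop (nhds (a f g))) :
    ∃ L : ℝ, Filter.Tendsto (fun n => φ.tilde (x n)) Filter.atTop (nhds L) ∧
      ∀ {I : Type*} (f : I → H), φ.IsRepresentation f →
        Summable (fun i => ‖a (f i) (f i)‖) ∧ ∑' i, a (f i) (f i) = (L : ℂ) :=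
  statement1_general φ hnormal x hx hcauchy a ha
end
end

section
/- Let φ be a weight on a von Neumann algebra M acting on a complex Hilbert space H, and let (x_n) be a sequence in m_φ^sa which is Cauchy with respect to the norm ‖·‖_φ. Then for all f, g ∈ D_φ, the limit lim_n ⟨x_n f, g⟩ exists in ℂ. -/
open scoped ENNReal NNReal ComplexOrder
open Filter Topology

noncomputable section

universe v

variable {H : Type*} [NormedAddCommGroup H] [InnerProductSpace ℂ H] [CompleteSpace H]

/-!
For `z ∈ m_φ⁺` and `f, g ∈ D_φ`, the Cauchy–Schwarz inequality for the positive form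
`(u, v) ↦ ⟨z u, v⟩` gives `|⟨z f, g⟩| ≤ C φ(z)`. Splitting `x ∈ m_φ^sa` as `x₁ − x₂` and taking
the infimum over all splittings yields `|⟨x f, g⟩| ≤ C ‖x‖_φ`, so `(⟨x_n f, g⟩)` is Cauchy in `ℂ`.
-/

open scoped InnerProductSpace

theorem ContinuousLinearMap.IsPositive.norm_inner_sq_le {H : Type*} [NormedAddCommGroup H]
    [InnerProductSpace ℂ H] [CompleteSpace H] {T : H →L[ℂ] H} (hT : T.IsPositive) (f g : H) :
    ‖⟪T f, g⟫_ℂ‖ ^ 2 ≤ (⟪T f, f⟫_ℂ).re * (⟪T g, g⟫_ℂ).re := by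
  obtain ⟨S, rfl⟩ := CStarAlgebra.nonneg_iff_eq_star_mul_self.mp (T.nonneg_iff_isPositive.mpr hT)
  have hS : ∀ u v : H, ⟪(star S * S) u, v⟫_ℂ = ⟪S u, S v⟫_ℂ := fun u v => by
    rw [star_eq_adjoint]; exact adjoint_inner_left S v (S u)
  simp only [hS, ← RCLike.re_to_complex, inner_self_eq_norm_sq, ← mul_pow]
  gcongr
  exact norm_inner_le_norm _ _

namespace Weight

variable {H : Type*} [NormedAddCommGroup H] [InnerProductSpace ℂ H] [CompleteSpace H]
  {M : VonNeumannAlgebra H} (φ : Weight M)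

theorem toReal_map_add {a b : H →L[ℂ] H} (ha : a ∈ φ.mPos) (hb : b ∈ φ.mPos) :
    (φ.toFun (a + b)).toReal = (φ.toFun a).toReal + (φ.toFun b).toReal := by
  rw [φ.map_add' a b ha.1 hb.1 ha.2.1 hb.2.1, ENNReal.toReal_add ha.2.2.ne hb.2.2.ne]

theorem add_mem_mPos_s2 {a b : H →L[ℂ] H} (ha : a ∈ φ.mPos) (hb : b ∈ φ.mPos) :
    a + b ∈ φ.mPos :=
  ⟨add_mem ha.1 hb.1, ha.2.1.add hb.2.1, by
    rw [φ.map_add' a b ha.1 hb.1 ha.2.1 hb.2.1]; exact ENNReal.add_lt_top.mpr ⟨ha.2.2, hb.2.2⟩⟩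

theorem sub_mem_mSa_s2 {a b : H →L[ℂ] H} (ha : a ∈ φ.mSa) (hb : b ∈ φ.mSa) : a - b ∈ φ.mSa := by
  obtain ⟨a₁, ha₁, a₂, ha₂, rfl⟩ := ha
  obtain ⟨b₁, hb₁, b₂, hb₂, rfl⟩ := hb
  exact ⟨a₁ + b₂, φ.add_mem_mPos_s2 ha₁ hb₂, a₂ + b₁, φ.add_mem_mPos_s2 ha₂ hb₁, by abel⟩

theorem exists_re_inner_le_of_mem_lineal {f : H} (hf : f ∈ φ.lineal) :
    ∃ l, 0 < l ∧ ∀ z ∈ φ.mPos, (⟪z f, f⟫_ℂ).re ≤ l * (φ.toFun z).toReal := by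
  obtain ⟨l, hl, hbound⟩ := hf
  refine ⟨l, hl, fun z ⟨hzM, hzP, hz⟩ => ?_⟩
  have h := hbound z hzM hzP
  rwa [← ENNReal.ofReal_toReal hz.ne, ← ENNReal.ofReal_mul hl.le,
    ENNReal.ofReal_le_ofReal_iff (by positivity)] at h

theorem exists_norm_inner_le_of_mem_lineal {f g : H} (hf : f ∈ φ.lineal) (hg : g ∈ φ.lineal) :
    ∃ C, 0 < C ∧ ∀ z ∈ φ.mPos, ‖⟪z f, g⟫_ℂ‖ ≤ C * (φ.toFun z).toReal := by
  obtain ⟨lf, hlf, hf⟩ := φ.exists_re_inner_le_of_mem_lineal hf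
  obtain ⟨lg, hlg, hg⟩ := φ.exists_re_inner_le_of_mem_lineal hg
  refine ⟨max lf lg, lt_max_of_lt_left hlf, fun z hz => ?_⟩
  have hφ : 0 ≤ (φ.toFun z).toReal := ENNReal.toReal_nonneg
  refine (pow_le_pow_iff_left₀ (norm_nonneg _) (by positivity) two_ne_zero).mp ?_
  calc ‖⟪z f, g⟫_ℂ‖ ^ 2 ≤ (⟪z f, f⟫_ℂ).re * (⟪z g, g⟫_ℂ).re := hz.2.1.norm_inner_sq_le f g
    _ ≤ (max lf lg * (φ.toFun z).toReal) * (max lf lg * (φ.toFun z).toReal) := by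
        apply mul_le_mul ((hf z hz).trans ?_) ((hg z hz).trans ?_)
          (hz.2.1.re_inner_nonneg_left g) (by positivity) <;> gcongr
        exacts [le_max_left _ _, le_max_right _ _]
    _ = (max lf lg * (φ.toFun z).toReal) ^ 2 := (sq _).symm

theorem norm_inner_le_mul_phiNorm {f g : H} {C : ℝ} (hC : 0 < C)
    (hbound : ∀ z ∈ φ.mPos, ‖⟪z f, g⟫_ℂ‖ ≤ C * (φ.toFun z).toReal)
    {y : H →L[ℂ] H} (hy : y ∈ φ.mSa) : ‖⟪y f, g⟫_ℂ‖ ≤ C * φ.phiNorm y := by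
  rw [← div_le_iff₀' hC]
  obtain ⟨y₁, hy₁, y₂, hy₂, hy⟩ := hy
  refine le_csInf ⟨_, y₁, hy₁, y₂, hy₂, hy, rfl⟩ ?_
  rintro _ ⟨z₁, hz₁, z₂, hz₂, rfl, rfl⟩
  rw [div_le_iff₀' hC, φ.toReal_map_add hz₁ hz₂, mul_add, sub_apply, inner_sub_left]
  exact (norm_sub_le _ _).trans (add_le_add (hbound z₁ hz₁) (hbound z₂ hz₂))

end Weight

/-- Let `φ` be a weight on a von Neumann algebra `M` acting on a
complex Hilbert space `H`, and let `(x_n)` be a sequence in `m_φ^sa` which is Cauchy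
with respect to the norm `‖·‖_φ`. Then for all `f, g ∈ D_φ`, the limit
`lim_n ⟨x_n f, g⟩` exists in `ℂ`. -/
theorem statement2 {H : Type*} [NormedAddCommGroup H] [InnerProductSpace ℂ H]
    [CompleteSpace H] {M : VonNeumannAlgebra H} (φ : Weight M)
    (x : ℕ → (H →L[ℂ] H)) (hx : ∀ n, x n ∈ φ.mSa)
    (hcauchy : ∀ ε : ℝ, 0 < ε → ∃ N : ℕ, ∀ m ≥ N, ∀ n ≥ N, φ.phiNorm (x m - x n) < ε) :
    ∀ f ∈ φ.lineal, ∀ g ∈ φ.lineal,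
      ∃ L : ℂ, Filter.Tendsto (fun n => (inner ℂ ((x n) f) g : ℂ)) Filter.atTop (nhds L) := by
  intro f hf g hg
  obtain ⟨C, hC, hbound⟩ := φ.exists_norm_inner_le_of_mem_lineal hf hg
  refine cauchySeq_tendsto_of_complete (Metric.cauchySeq_iff.mpr fun ε hε => ?_)
  obtain ⟨N, hN⟩ := hcauchy (ε / C) (by positivity)
  refine ⟨N, fun m hm n hn => ?_⟩
  calc dist ⟪x m f, g⟫_ℂ ⟪x n f, g⟫_ℂ = ‖⟪(x m - x n) f, g⟫_ℂ‖ := by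
        rw [dist_eq_norm, sub_apply, inner_sub_left]
    _ ≤ C * φ.phiNorm (x m - x n) :=
        φ.norm_inner_le_mul_phiNorm hC hbound (φ.sub_mem_mSa_s2 (hx m) (hx n))
    _ < C * (ε / C) := by gcongr; exact hN m hm n hn
    _ = ε := mul_div_cancel₀ ε hC.ne'
end
end

section
/- Let E be a real Banach space which is an ordered vector space whose positive cone E⁺ = {y ∈ E : 0 ≤ y} is closed, let u ∈ E⁺ be such that the order interval [0, u] = {ψ ∈ E : 0 ≤ ψ ≤ u} is norm-bounded, and let F : E → ℝ be a linear functional with the following countable-additivity property: whenever (ψ_n)_{n≥1} is a sequence in E⁺ whose series converges in norm to some ψ ∈ E, the series Σ_n F(ψ_n) converges and equals F(ψ). Then sup{|F(ψ)| : ψ ∈ [0, u]} < ∞. -/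
/-!
If `|F|` were unbounded on `[0, u]`, pick `gₙ ∈ [0, u]` with `|F gₙ| > 4ⁿ`. The positive vectors
`2⁻ⁿ gₙ` have norms at most `2⁻ⁿ C`, so their series converges in the Banach space `E`;
countable additivity then makes `Σ F(2⁻ⁿ gₙ)` converge, forcing `F(2⁻ⁿ gₙ) → 0`, whereas
`|F(2⁻ⁿ gₙ)| > 2ⁿ`.
-/

open Filter Topology Finset

theorem tendsto_zero_of_tendsto_sum_range {G : Type*} [AddCommGroup G] [TopologicalSpace G]
    [IsTopologicalAddGroup G] {f : ℕ → G} {a : G}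
    (h : Tendsto (fun n => ∑ i ∈ range n, f i) atTop (𝓝 a)) : Tendsto f atTop (𝓝 0) := by
  simpa [Function.comp_def, sum_range_succ] using (h.comp (tendsto_add_atTop_nat 1)).sub h

theorem summable_geometric_two_smul_of_norm_le {E : Type*} [NormedAddCommGroup E]
    [NormedSpace ℝ E] [CompleteSpace E] {g : ℕ → E} {C : ℝ} (hg : ∀ n, ‖g n‖ ≤ C) :
    Summable fun n => ((1 : ℝ) / 2) ^ n • g n :=
  (summable_geometric_two.mul_left C).of_norm_bounded fun n => by
    rw [norm_smul, norm_pow, Real.norm_of_nonneg (by norm_num), mul_comm]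
    exact mul_le_mul_of_nonneg_right (hg n) (by positivity)

section SigmaAdditive

variable {E : Type*} [NormedAddCommGroup E] [NormedSpace ℝ E] [Preorder E]

def SigmaAdditiveOnNonneg (F : E →ₗ[ℝ] ℝ) : Prop :=
  ∀ (ψ : ℕ → E), (∀ n, 0 ≤ ψ n) → ∀ s : E,
    Tendsto (fun k => ∑ n ∈ range k, ψ n) atTop (𝓝 s) →
    Tendsto (fun k => ∑ n ∈ range k, F (ψ n)) atTop (𝓝 (F s))

theorem SigmaAdditiveOnNonneg.tendsto_apply_zero {F : E →ₗ[ℝ] ℝ} (hF : SigmaAdditiveOnNonneg F)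
    {ψ : ℕ → E} (hψ : Summable ψ) (hψ0 : ∀ n, 0 ≤ ψ n) :
    Tendsto (fun n => F (ψ n)) atTop (𝓝 0) :=
  tendsto_zero_of_tendsto_sum_range (hF ψ hψ0 _ hψ.hasSum.tendsto_sum_nat)

theorem SigmaAdditiveOnNonneg.exists_abs_apply_le [CompleteSpace E] [PosSMulMono ℝ E]
    {F : E →ₗ[ℝ] ℝ} (hF : SigmaAdditiveOnNonneg F) {S : Set E} (hS0 : ∀ x ∈ S, 0 ≤ x)
    (hSbdd : ∃ C, ∀ x ∈ S, ‖x‖ ≤ C) : ∃ C, ∀ x ∈ S, |F x| ≤ C := by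
  by_contra! hunbdd
  choose g hgS hgF using fun n : ℕ => hunbdd ((4 : ℝ) ^ n)
  obtain ⟨C, hC⟩ := hSbdd
  set φ : ℕ → E := fun n => ((1 : ℝ) / 2) ^ n • g n
  have hφ_tendsto : Tendsto (fun n => F (φ n)) atTop (𝓝 0) :=
    hF.tendsto_apply_zero (summable_geometric_two_smul_of_norm_le fun n => hC _ (hgS n))
      fun n => smul_nonneg (by positivity) (hS0 _ (hgS n))
  have hφ_large (n : ℕ) : 1 ≤ |F (φ n)| := by
    rw [map_smul, smul_eq_mul, abs_mul, abs_of_pos (by positivity)]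
    calc (1 : ℝ) ≤ ((1 : ℝ) / 2) ^ n * 4 ^ n := by
          rw [← mul_pow]; exact one_le_pow₀ (by norm_num)
      _ ≤ ((1 : ℝ) / 2) ^ n * |F (g n)| := by gcongr; exact (hgF n).le
  obtain ⟨n, hn⟩ := (hφ_tendsto.abs.eventually (gt_mem_nhds (by norm_num : |(0 : ℝ)| < 1))).exists
  exact (hφ_large n).not_gt hn

end SigmaAdditive

theorem statement9_general {E : Type*} [NormedAddCommGroup E] [NormedSpace ℝ E]
    [CompleteSpace E] [PartialOrder E]
    (hsmul : ∀ c : ℝ, 0 ≤ c → ∀ x y : E, x ≤ y → c • x ≤ c • y)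
    (u : E)
    (hbdd : ∃ C : ℝ, ∀ ψ : E, 0 ≤ ψ → ψ ≤ u → ‖ψ‖ ≤ C)
    (F : E →ₗ[ℝ] ℝ)
    (hF : ∀ (ψ : ℕ → E), (∀ n, 0 ≤ ψ n) → ∀ s : E,
      Filter.Tendsto (fun k => ∑ n ∈ Finset.range k, ψ n) Filter.atTop (nhds s) →
      Filter.Tendsto (fun k => ∑ n ∈ Finset.range k, F (ψ n)) Filter.atTop (nhds (F s))) :
    ∃ C : ℝ, ∀ ψ : E, 0 ≤ ψ → ψ ≤ u → |F ψ| ≤ C := by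
  have : PosSMulMono ℝ E := ⟨fun c hc _ _ hxy => hsmul c hc _ _ hxy⟩
  obtain ⟨C, hC⟩ := SigmaAdditiveOnNonneg.exists_abs_apply_le (S := Set.Icc 0 u) hF
    (fun _ hx => hx.1) (hbdd.imp fun _ hC x hx => hC x hx.1 hx.2)
  exact ⟨C, fun ψ hψ0 hψu => hC ψ ⟨hψ0, hψu⟩⟩

/-- Let `E` be a real Banach space which is an ordered vector space
(the order is translation-invariant and invariant under multiplication by nonnegative
scalars) whose positive cone `E⁺ = {y : 0 ≤ y}` is closed, let `u ∈ E⁺` be such that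
the order interval `[0, u]` is norm-bounded, and let `F : E → ℝ` be a linear
functional with the following countable-additivity property: whenever `(ψ_n)` is a
sequence in `E⁺` whose series converges in norm to some `ψ ∈ E`, the series
`Σ_n F(ψ_n)` converges and equals `F(ψ)`. Then `sup {|F(ψ)| : ψ ∈ [0, u]} < ∞`. -/
theorem statement9 {E : Type*} [NormedAddCommGroup E] [NormedSpace ℝ E]
    [CompleteSpace E] [PartialOrder E]
    (hadd : ∀ z x y : E, x ≤ y → x + z ≤ y + z)
    (hsmul : ∀ c : ℝ, 0 ≤ c → ∀ x y : E, x ≤ y → c • x ≤ c • y)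
    (hclosed : IsClosed {y : E | 0 ≤ y})
    (u : E) (hu : 0 ≤ u)
    (hbdd : ∃ C : ℝ, ∀ ψ : E, 0 ≤ ψ → ψ ≤ u → ‖ψ‖ ≤ C)
    (F : E →ₗ[ℝ] ℝ)
    (hF : ∀ (ψ : ℕ → E), (∀ n, 0 ≤ ψ n) → ∀ s : E,
      Filter.Tendsto (fun k => ∑ n ∈ Finset.range k, ψ n) Filter.atTop (nhds s) →
      Filter.Tendsto (fun k => ∑ n ∈ Finset.range k, F (ψ n)) Filter.atTop (nhds (F s))) :
    ∃ C : ℝ, ∀ ψ : E, 0 ≤ ψ → ψ ≤ u → |F ψ| ≤ C :=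
  statement9_general hsmul u hbdd F hF
end
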